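/- arXiv:2603.22030 — 2 statements merged into one kernel-verified Lean document; each statement's English description precedes it below -/
import Mathlib

section
/- Let n, d, r ∈ ℕ, J an n × d real matrix, Υ an n × n positive semidefinite real matrix, τ > 0, and H = Jᵀ Υ J + τ⁻²·I_d. Let Z be a d × r real matrix whose columns are orthonormal (Zᵀ Z = I_r) and satisfy J·Z = 0. Then Zᵀ H⁻¹ Z = τ²·I_r. -/
/-!
Since `J Z = 0`, the precision `H` acts on the columns of `Z` as the scalar `τ⁻²`, so `H⁻¹`
acts on them as `τ²`. Positive definiteness of `H` is what makes `H⁻¹` a genuine inverse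
(`Matrix.inv` of a singular matrix is `0`).
-/

open Matrix

namespace Matrix

variable {m n : Type*} [DecidableEq n]

theorem PosSemidef.add_smul_one_posDef {A : Matrix n n ℝ} (hA : A.PosSemidef) {c : ℝ}
    (hc : 0 < c) : (A + c • (1 : Matrix n n ℝ)).PosDef := by
  rw [add_comm]
  exact (PosDef.one.smul hc).add_posSemidef hA

theorem transpose_mul_mul_add_smul_one_posDef [Finite n] {p : Type*} [Fintype p]
    (J : Matrix p n ℝ) {Υ : Matrix p p ℝ} (hΥ : Υ.PosSemidef) {c : ℝ} (hc : 0 < c) :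
    (Jᵀ * Υ * J + c • (1 : Matrix n n ℝ)).PosDef := by
  simpa using (hΥ.conjTranspose_mul_mul_same J).add_smul_one_posDef hc

theorem inv_mul_eq_inv_smul_of_mul_eq_smul [Fintype n] {K : Type*} [Field K] {A : Matrix n n K}
    {B : Matrix n m K} (hA : IsUnit A.det) {c : K} (hc : c ≠ 0) (hAB : A * B = c • B) :
    A⁻¹ * B = c⁻¹ • B :=
  calc A⁻¹ * B = c⁻¹ • (A⁻¹ * (c • B)) := by
        rw [Matrix.mul_smul, smul_smul, inv_mul_cancel₀ hc, one_smul]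
    _ = c⁻¹ • B := by rw [← hAB, nonsing_inv_mul_cancel_left A B hA]

end Matrix

/-- For `H = Jᵀ Υ J + τ⁻² I` with `Υ` positive semidefinite and `τ > 0`,
and `Z` with orthonormal columns (`Zᵀ Z = I`) satisfying `J Z = 0`, the projected inverse
precision equals the prior covariance: `Zᵀ H⁻¹ Z = τ² I`. -/
theorem projected_posterior_covariance_is_prior (n d r : ℕ)
    (J : Matrix (Fin n) (Fin d) ℝ) (Ups : Matrix (Fin n) (Fin n) ℝ)
    (hUps : Ups.PosSemidef) (τ : ℝ) (hτ : 0 < τ)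
    (Z : Matrix (Fin d) (Fin r) ℝ) (hZ : Zᵀ * Z = 1) (hJZ : J * Z = 0) :
    Zᵀ * (Jᵀ * Ups * J + (τ⁻¹ ^ 2) • (1 : Matrix (Fin d) (Fin d) ℝ))⁻¹ * Z
      = τ ^ 2 • (1 : Matrix (Fin r) (Fin r) ℝ) := by
  set H := Jᵀ * Ups * J + (τ⁻¹ ^ 2) • (1 : Matrix (Fin d) (Fin d) ℝ) with hH_def
  have hc : 0 < τ⁻¹ ^ 2 := by positivity
  have hH : IsUnit H.det :=
    (transpose_mul_mul_add_smul_one_posDef J hUps hc).det_pos.ne'.isUnit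
  have hHZ : H * Z = τ⁻¹ ^ 2 • Z := by
    rw [hH_def, Matrix.add_mul, Matrix.mul_assoc, hJZ, Matrix.mul_zero, zero_add, smul_mul,
      Matrix.one_mul]
  have hHinvZ : H⁻¹ * Z = τ ^ 2 • Z := by
    rw [inv_mul_eq_inv_smul_of_mul_eq_smul hH hc.ne' hHZ, inv_pow, inv_inv]
  rw [Matrix.mul_assoc, hHinvZ, Matrix.mul_smul, hZ]
end

section
/- Fix α > 0 and define for integers k ≥ 2 the quantity C_k = Γ(α + 1/2)²·Γ(kα)/(Γ(α)²·Γ(kα + 1)) − [Γ(α + 1/2)·Γ(kα)/(Γ(α)·Γ(kα + 1/2))]². Then C_k = O(k^{−2}) as k → ∞: there exist a constant C > 0 and K such that |C_k| ≤ C·k^{−2} for all k ≥ K. -/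
/-! Writing `x = kα` and `A = Γ(α+1/2)/Γ(α)`, the functional equation `Γ(x+1) = xΓ(x)` turns
`C_k` into `A² (1/x - (Γ(x)/Γ(x+1/2))²)`. Log-convexity of `Γ` at the midpoints `x + 1/2` of
`[x, x+1]` and `x + 1` of `[x+1/2, x+3/2]` squeezes `(Γ(x)/Γ(x+1/2))²` between `1/x` and
`1/x + 1/(2x²)`, so `|C_k| ≤ A² / (2α²k²)`. -/

namespace Real

theorem Gamma_midpoint_sq_le {s t : ℝ} (hs : 0 < s) (ht : 0 < t) :
    Gamma ((s + t) / 2) ^ 2 ≤ Gamma s * Gamma t := by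
  have h := Gamma_mul_add_mul_le_rpow_Gamma_mul_rpow_Gamma hs ht one_half_pos one_half_pos
    (add_halves 1)
  rw [← mul_rpow (Gamma_pos_of_pos hs).le (Gamma_pos_of_pos ht).le, ← sqrt_eq_rpow,
    show 1 / 2 * s + 1 / 2 * t = (s + t) / 2 by ring] at h
  calc Gamma ((s + t) / 2) ^ 2 ≤ √(Gamma s * Gamma t) ^ 2 :=
        pow_le_pow_left₀ (Gamma_pos_of_pos (by positivity)).le h 2
    _ = Gamma s * Gamma t := sq_sqrt (mul_pos (Gamma_pos_of_pos hs) (Gamma_pos_of_pos ht)).le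

theorem Gamma_add_half_sq_le {x : ℝ} (hx : 0 < x) :
    Gamma (x + 1 / 2) ^ 2 ≤ x * Gamma x ^ 2 := by
  have h := Gamma_midpoint_sq_le hx (by positivity : 0 < x + 1)
  rw [show (x + (x + 1)) / 2 = x + 1 / 2 by ring, Gamma_add_one hx.ne'] at h
  linarith

theorem sq_mul_Gamma_sq_le {x : ℝ} (hx : 0 < x) :
    x ^ 2 * Gamma x ^ 2 ≤ (x + 1 / 2) * Gamma (x + 1 / 2) ^ 2 := by
  have h := Gamma_midpoint_sq_le (s := x + 1 / 2) (t := x + 1 / 2 + 1) (by positivity)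
    (by positivity)
  rw [show (x + 1 / 2 + (x + 1 / 2 + 1)) / 2 = x + 1 by ring, Gamma_add_one hx.ne',
    Gamma_add_one (by positivity)] at h
  linarith

theorem abs_inv_sub_Gamma_div_Gamma_add_half_sq_le {x : ℝ} (hx : 0 < x) :
    |1 / x - (Gamma x / Gamma (x + 1 / 2)) ^ 2| ≤ 1 / (2 * x ^ 2) := by
  have hΓ := Gamma_pos_of_pos (show 0 < x + 1 / 2 by positivity)
  have lower : 1 / x ≤ (Gamma x / Gamma (x + 1 / 2)) ^ 2 := by
    rw [div_pow, div_le_div_iff₀ hx (by positivity)]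
    linarith [Gamma_add_half_sq_le hx]
  have upper : (Gamma x / Gamma (x + 1 / 2)) ^ 2 ≤ 1 / x + 1 / (2 * x ^ 2) := by
    rw [show 1 / x + 1 / (2 * x ^ 2) = (x + 1 / 2) / x ^ 2 by field_simp, div_pow,
      div_le_div_iff₀ (by positivity) (by positivity)]
    linarith [sq_mul_Gamma_sq_le hx]
  rw [abs_sub_comm, abs_of_nonneg (sub_nonneg.mpr lower)]
  linarith

end Real

/-- For fixed `α > 0`, the quantity
`C_k = Γ(α+1/2)²Γ(kα)/(Γ(α)²Γ(kα+1)) − [Γ(α+1/2)Γ(kα)/(Γ(α)Γ(kα+1/2))]²`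
satisfies `C_k = O(k^{−2})` as `k → ∞`. -/
theorem dirichlet_sqrt_covariance_decay (α : ℝ) (hα : 0 < α) :
    ∃ (C : ℝ) (K : ℕ), 0 < C ∧ ∀ k : ℕ, K ≤ k →
      |Real.Gamma (α + 1 / 2) ^ 2 * Real.Gamma ((k : ℝ) * α) /
          (Real.Gamma α ^ 2 * Real.Gamma ((k : ℝ) * α + 1)) -
        (Real.Gamma (α + 1 / 2) * Real.Gamma ((k : ℝ) * α) /
          (Real.Gamma α * Real.Gamma ((k : ℝ) * α + 1 / 2))) ^ 2|
        ≤ C / (k : ℝ) ^ 2 := by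
  set A := Real.Gamma (α + 1 / 2) / Real.Gamma α
  have hA : 0 < A := div_pos (Real.Gamma_pos_of_pos (by positivity)) (Real.Gamma_pos_of_pos hα)
  refine ⟨A ^ 2 / (2 * α ^ 2), 1, by positivity, fun k hk => ?_⟩
  have hx : 0 < (k : ℝ) * α := mul_pos (by exact_mod_cast hk) hα
  set x := (k : ℝ) * α with hx_def
  have factor : Real.Gamma (α + 1 / 2) ^ 2 * Real.Gamma x /
        (Real.Gamma α ^ 2 * Real.Gamma (x + 1)) -
      (Real.Gamma (α + 1 / 2) * Real.Gamma x / (Real.Gamma α * Real.Gamma (x + 1 / 2))) ^ 2 =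
      A ^ 2 * (1 / x - (Real.Gamma x / Real.Gamma (x + 1 / 2)) ^ 2) := by
    rw [Real.Gamma_add_one hx.ne']
    simp only [A]
    field_simp [(Real.Gamma_pos_of_pos hx).ne']
  calc _ = A ^ 2 * |1 / x - (Real.Gamma x / Real.Gamma (x + 1 / 2)) ^ 2| := by
        rw [factor, abs_mul, abs_of_nonneg (sq_nonneg A)]
    _ ≤ A ^ 2 * (1 / (2 * x ^ 2)) := by
        gcongr; exact Real.abs_inv_sub_Gamma_div_Gamma_add_half_sq_le hx
    _ = A ^ 2 / (2 * α ^ 2) / (k : ℝ) ^ 2 := by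
        rw [hx_def]; field_simp
end
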